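/- arXiv:1810.07793 — 2 statements merged into one kernel-verified Lean document; each statement's English description precedes it below -/
import Mathlib

section
/- Let (X,d) be a compact metric space with diam(X) < D, let ε > 0, and let α, β be fully supported Borel probability measures on X each satisfying the Λ-doubling condition for some Λ > 0. Then for every x ∈ X, the Prokhorov distance satisfies d_P(m_α^{(ε)}(x), m_β^{(ε)}(x)) ≤ Φ_{Λ,D,ε}(d_P(α,β)). -/
open MeasureTheory Metric Set Filter

/-- The ℓ¹-Wasserstein distance: infimum over couplings of the expected distance. -/
noncomputable def wassersteinDist {X : Type*} [MeasurableSpace X] [PseudoMetricSpace X]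
    (α β : Measure X) : ℝ :=
  sInf ((fun μ : Measure (X × X) => ∫ p, dist p.1 p.2 ∂μ) ''
    {μ : Measure (X × X) | μ.map Prod.fst = α ∧ μ.map Prod.snd = β})

/-- The (one-sided) Prokhorov distance between Borel probability measures. -/
noncomputable def prokhorovDist {X : Type*} [MeasurableSpace X] [PseudoMetricSpace X]
    (α β : Measure X) : ℝ :=
  sInf {δ : ℝ | 0 < δ ∧ ∀ A : Set X, α A ≤ β (thickening δ A) + ENNReal.ofReal δ}

/-- ε-local truncation of α at x: restrict to the closed ε-ball and renormalize. -/
noncomputable def localTrunc {X : Type*} [MeasurableSpace X] [PseudoMetricSpace X]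
    (α : Measure X) (ε : ℝ) (x : X) : Measure X :=
  (α (closedBall x ε))⁻¹ • α.restrict (closedBall x ε)

/-- The support of a measure: points all of whose neighborhoods have positive measure. -/
def msupport {X : Type*} [TopologicalSpace X] [MeasurableSpace X] (μ : Measure X) : Set X :=
  {x : X | ∀ U ∈ nhds x, 0 < μ U}

/-- The Λ-doubling condition for a Borel measure: for points in the support,
`α (closedBall x r₁) / α (closedBall x r₂) ≤ (r₁/r₂)^Λ` whenever `r₁ ≥ r₂ > 0`. -/
def DoublingCond {X : Type*} [MeasurableSpace X] [PseudoMetricSpace X]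
    (α : Measure X) (Λ : ℝ) : Prop :=
  ∀ x ∈ msupport α, ∀ r₁ r₂ : ℝ, r₂ ≤ r₁ → 0 < r₂ →
    α (closedBall x r₁) / α (closedBall x r₂) ≤ ENNReal.ofReal ((r₁ / r₂) ^ Λ)

/-- `ψ_{Λ,D}(r) = min(1, (r/D)^Λ)`. -/
noncomputable def psiLD (Λ D r : ℝ) : ℝ := min 1 ((r / D) ^ Λ)

/-- `Φ_{Λ,D,ε}(η) = η/ψ_{Λ,D}(ε) + ((1+η/ε)^Λ − 1)`. -/
noncomputable def PhiLDE (Λ D ε η : ℝ) : ℝ := η / psiLD Λ D ε + ((1 + η / ε) ^ Λ - 1)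

/-!
Truncating to `B_ε(x)` and `δ`-thickening can only move mass of `A ∩ B_ε(x)` into the shell
`B_{ε+δ}(x) \ B_ε(x)`, whose `β`-mass is at most `((1 + δ/ε)^Λ - 1) β(B_ε(x))` by doubling.
After renormalizing, the additive error `δ` is divided by `α(B_ε(x)) ≥ ψ_{Λ,D}(ε)` (doubling from
scale `ε` up to `D`, where the ball is the whole space), and the normalizing constants compare
favourably once `β(B_ε(x)) ≤ α(B_ε(x))`; this is no loss of generality because the one-sided
Prokhorov condition is symmetric for probability measures. Since `Φ` is continuous, the bound
passes to the infimum defining `d_P(α, β)`.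
-/

open scoped ENNReal

theorem le_apply_csInf_of_forall_le {α β : Type*} [ConditionallyCompleteLinearOrder α]
    [TopologicalSpace α] [OrderTopology α] [TopologicalSpace β] [Preorder β] [ClosedIciTopology β]
    {S : Set α} (hne : S.Nonempty) (hbdd : BddBelow S) {f : α → β}
    (hf : ContinuousWithinAt f S (sInf S)) {c : β} (h : ∀ s ∈ S, c ≤ f s) : c ≤ f (sInf S) := by
  simpa only [closure_Ici, mem_Ici] using hf.mem_closure (csInf_mem_closure hne hbdd) (t := Ici c) h

theorem ENNReal.inv_mul_le_inv_mul_add_ofReal {p q a b : ℝ≥0∞} {κ δ ψ : ℝ}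
    (h : p ≤ q + ENNReal.ofReal κ * b + ENNReal.ofReal δ) (hba : b ≤ a)
    (hψ : ENNReal.ofReal ψ ≤ a) (hψ0 : 0 < ψ) (hδ : 0 ≤ δ) (hκ : 0 ≤ κ) :
    a⁻¹ * p ≤ b⁻¹ * q + ENNReal.ofReal (δ / ψ + κ) := by
  have hq : a⁻¹ * q ≤ b⁻¹ * q := by gcongr
  have hκb : a⁻¹ * (ENNReal.ofReal κ * b) ≤ ENNReal.ofReal κ := by
    rw [mul_left_comm]
    exact mul_le_of_le_one_right' ((mul_le_mul_right hba _).trans a.inv_mul_le_one)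
  have hδψ : a⁻¹ * ENNReal.ofReal δ ≤ ENNReal.ofReal (δ / ψ) := by
    rw [div_eq_inv_mul, ENNReal.ofReal_mul (inv_nonneg.mpr hψ0.le), ENNReal.ofReal_inv_of_pos hψ0]
    gcongr
  calc a⁻¹ * p ≤ a⁻¹ * q + a⁻¹ * (ENNReal.ofReal κ * b) + a⁻¹ * ENNReal.ofReal δ := by
        rw [← mul_add, ← mul_add]; gcongr
    _ ≤ b⁻¹ * q + ENNReal.ofReal κ + ENNReal.ofReal (δ / ψ) := by gcongr
    _ ≤ b⁻¹ * q + ENNReal.ofReal (δ / ψ + κ) := by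
      rw [add_assoc, add_comm (ENNReal.ofReal κ), ENNReal.ofReal_add (div_nonneg hδ hψ0.le) hκ]

theorem psiLD_pos {Λ D ε : ℝ} (hD : 0 < D) (hε : 0 < ε) : 0 < psiLD Λ D ε :=
  lt_min one_pos (Real.rpow_pos_of_pos (div_pos hε hD) Λ)

theorem le_PhiLDE {Λ D ε δ : ℝ} (hΛ : 0 ≤ Λ) (hD : 0 < D) (hε : 0 < ε) (hδ : 0 ≤ δ) :
    δ ≤ PhiLDE Λ D ε δ := by
  have h₁ : δ ≤ δ / psiLD Λ D ε := le_div_self hδ (psiLD_pos hD hε) (min_le_left _ _)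
  have h₂ : 1 ≤ (1 + δ / ε) ^ Λ :=
    Real.one_le_rpow (le_add_of_nonneg_right (div_nonneg hδ hε.le)) hΛ
  rw [PhiLDE]
  linarith

theorem continuous_PhiLDE {Λ : ℝ} (hΛ : 0 ≤ Λ) (D ε : ℝ) : Continuous (PhiLDE Λ D ε) := by
  unfold PhiLDE
  have := Real.continuous_rpow_const hΛ
  fun_prop

theorem Metric.thickening_inter_closedBall_subset {X : Type*} [PseudoMetricSpace X] (δ : ℝ)
    (A : Set X) (x : X) (ε : ℝ) :
    thickening δ (A ∩ closedBall x ε) ⊆ thickening δ A ∩ closedBall x (ε + δ) := by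
  intro z hz
  obtain ⟨w, ⟨hwA, hwx⟩, hzw⟩ := mem_thickening_iff.mp hz
  refine ⟨mem_thickening_iff.mpr ⟨w, hwA, hzw⟩, mem_closedBall.mpr ?_⟩
  linarith [dist_triangle z w x, mem_closedBall.mp hwx]

section Prokhorov

variable {X : Type*} [PseudoMetricSpace X] [MeasurableSpace X] {α β : Measure X} {δ : ℝ}

def ProkhorovCond (α β : Measure X) (δ : ℝ) : Prop :=
  ∀ A : Set X, α A ≤ β (thickening δ A) + ENNReal.ofReal δ

theorem prokhorovDist_le (hδ : 0 < δ) (h : ProkhorovCond α β δ) : prokhorovDist α β ≤ δ :=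
  csInf_le ⟨0, fun _ hδ' => hδ'.1.le⟩ ⟨hδ, h⟩

theorem prokhorovCond_one [IsProbabilityMeasure α] : ProkhorovCond α β 1 := fun _ =>
  prob_le_one.trans (by rw [ENNReal.ofReal_one]; exact le_add_self)

theorem ProkhorovCond.symm [OpensMeasurableSpace X] (h : ProkhorovCond α β δ)
    (hfin : β univ ≠ ∞) (huniv : α univ = β univ) : ProkhorovCond β α δ := by
  intro A
  set C := closure A
  set T := thickening δ C
  have hαfin : α univ ≠ ∞ := huniv ▸ hfin
  -- `h` applied to `Tᶜ`, whose `δ`-thickening misses `C`, gives the claim after taking complements.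
  have hsub : thickening δ Tᶜ ⊆ Cᶜ := fun z hz hzC => by
    obtain ⟨w, hw, hzw⟩ := mem_thickening_iff.mp hz
    exact hw (mem_thickening_iff.mpr ⟨z, hzC, by rwa [dist_comm]⟩)
  have hcompl : α Tᶜ ≤ β Cᶜ + ENNReal.ofReal δ := (h Tᶜ).trans (by gcongr)
  rw [measure_compl isOpen_thickening.measurableSet
      (measure_ne_top_of_subset (subset_univ _) hαfin),
    measure_compl isClosed_closure.measurableSet (measure_ne_top_of_subset (subset_univ _) hfin),
    huniv, tsub_le_iff_right] at hcompl
  have hβC : β C ≤ β univ := measure_mono (subset_univ _)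
  calc β A ≤ β C := measure_mono subset_closure
    _ ≤ α T + ENNReal.ofReal δ := by
      rw [← ENNReal.add_le_add_iff_left (ENNReal.sub_ne_top hfin), tsub_add_cancel_of_le hβC]
      exact hcompl.trans_eq (by ring)
    _ = α (thickening δ A) + ENNReal.ofReal δ := by simp only [T, C, thickening_closure]

theorem localTrunc_apply [OpensMeasurableSpace X] (ε : ℝ) (x : X) (A : Set X) :
    localTrunc α ε x A = (α (closedBall x ε))⁻¹ * α (A ∩ closedBall x ε) := by
  rw [localTrunc, Measure.smul_apply, Measure.restrict_apply' measurableSet_closedBall, smul_eq_mul]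

theorem localTrunc_apply_univ [OpensMeasurableSpace X] [IsFiniteMeasure α] {ε : ℝ} {x : X}
    (h : α (closedBall x ε) ≠ 0) : localTrunc α ε x univ = 1 := by
  rw [localTrunc_apply, univ_inter, ENNReal.inv_mul_cancel h (measure_ne_top _ _)]

theorem measure_inter_closedBall_le_of_prokhorovCond [OpensMeasurableSpace X] [IsFiniteMeasure β]
    (h : ProkhorovCond α β δ) (hδ : 0 ≤ δ) {x : X} {ε K : ℝ}
    (hK : β (closedBall x (ε + δ)) ≤ ENNReal.ofReal K * β (closedBall x ε)) (A : Set X) :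
    α (A ∩ closedBall x ε) ≤ β (thickening δ A ∩ closedBall x ε) +
      ENNReal.ofReal (K - 1) * β (closedBall x ε) + ENNReal.ofReal δ := by
  have hball : closedBall x ε ⊆ closedBall x (ε + δ) := closedBall_subset_closedBall (by linarith)
  have hshell : β (closedBall x (ε + δ) \ closedBall x ε) ≤
      ENNReal.ofReal (K - 1) * β (closedBall x ε) := by
    rw [measure_sdiff hball measurableSet_closedBall.nullMeasurableSet (measure_ne_top _ _),
      ENNReal.ofReal_sub _ zero_le_one, ENNReal.ofReal_one,
      ENNReal.sub_mul fun _ _ => measure_ne_top _ _, one_mul]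
    exact tsub_le_tsub_right hK _
  have hsplit : thickening δ A ∩ closedBall x (ε + δ) ⊆
      (thickening δ A ∩ closedBall x ε) ∪ (closedBall x (ε + δ) \ closedBall x ε) := by
    rintro z ⟨hzT, hz⟩
    by_cases hzε : z ∈ closedBall x ε
    exacts [Or.inl ⟨hzT, hzε⟩, Or.inr ⟨hz, hzε⟩]
  calc α (A ∩ closedBall x ε)
      ≤ β (thickening δ (A ∩ closedBall x ε)) + ENNReal.ofReal δ := h _
    _ ≤ β (thickening δ A ∩ closedBall x (ε + δ)) + ENNReal.ofReal δ := by
      gcongr; exact thickening_inter_closedBall_subset δ A x ε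
    _ ≤ _ := by
      gcongr
      exact (measure_mono hsplit).trans ((measure_union_le _ _).trans (by gcongr))

end Prokhorov

section Doubling

variable {X : Type*} [PseudoMetricSpace X] [MeasurableSpace X] {α : Measure X} {Λ : ℝ} {x : X}

theorem DoublingCond.measure_closedBall_le (hα : DoublingCond α Λ) (hx : x ∈ msupport α)
    {r₁ r₂ : ℝ} (hr₂ : 0 < r₂) (hr : r₂ ≤ r₁) :
    α (closedBall x r₁) ≤ ENNReal.ofReal ((r₁ / r₂) ^ Λ) * α (closedBall x r₂) := by
  have hpos : 0 < (r₁ / r₂) ^ Λ := Real.rpow_pos_of_pos (div_pos (hr₂.trans_le hr) hr₂) Λ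
  exact (ENNReal.div_le_iff_le_mul (Or.inr ENNReal.ofReal_ne_top)
    (Or.inr (ENNReal.ofReal_pos.mpr hpos).ne')).mp (hα x hx r₁ r₂ hr hr₂)

theorem DoublingCond.ofReal_psiLD_le [BoundedSpace X] [IsProbabilityMeasure α]
    (hα : DoublingCond α Λ) (hx : x ∈ msupport α) {D ε : ℝ} (hD : diam (univ : Set X) < D)
    (hε : 0 < ε) : ENNReal.ofReal (psiLD Λ D ε) ≤ α (closedBall x ε) := by
  have hball : ∀ r, diam (univ : Set X) < r → closedBall x r = univ := fun r hr =>
    eq_univ_of_forall fun y => mem_closedBall.mpr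
      ((dist_le_diam_of_mem (Bornology.IsBounded.all _) (mem_univ y) (mem_univ x)).trans hr.le)
  rcases le_or_gt D ε with hDε | hεD
  · rw [hball ε (hD.trans_le hDε), measure_univ]
    exact ENNReal.ofReal_le_one.mpr (min_le_left _ _)
  · have hD0 : 0 < D := hε.trans hεD
    have h := hα.measure_closedBall_le hx hε hεD.le
    rw [hball D hD, measure_univ, ← ENNReal.inv_le_iff_le_mul (fun _ => ?_)
      (fun h => absurd h ENNReal.ofReal_ne_top),
      ← ENNReal.ofReal_inv_of_pos (Real.rpow_pos_of_pos (div_pos hD0 hε) Λ),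
      ← Real.inv_rpow (div_pos hD0 hε).le, inv_div] at h
    · exact (ENNReal.ofReal_le_ofReal (min_le_right _ _)).trans h
    · exact (ENNReal.ofReal_pos.mpr (Real.rpow_pos_of_pos (div_pos hD0 hε) Λ)).ne'

end Doubling

theorem ProkhorovCond.localTrunc {X : Type*} [PseudoMetricSpace X] [BoundedSpace X]
    [MeasurableSpace X] [OpensMeasurableSpace X] {α β : Measure X} [IsProbabilityMeasure α]
    [IsProbabilityMeasure β] {Λ D ε δ : ℝ} {x : X} (h : ProkhorovCond α β δ) (hδ : 0 ≤ δ)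
    (hΛ : 0 ≤ Λ) (hD : diam (univ : Set X) < D) (hε : 0 < ε) (hα : DoublingCond α Λ)
    (hβ : DoublingCond β Λ) (hαx : x ∈ msupport α) (hβx : x ∈ msupport β) :
    ProkhorovCond (localTrunc α ε x) (localTrunc β ε x) (PhiLDE Λ D ε δ) := by
  wlog hle : β (closedBall x ε) ≤ α (closedBall x ε) generalizing α β
  · have huniv : ∀ μ : Measure X, [IsProbabilityMeasure μ] → x ∈ msupport μ →
        _root_.localTrunc μ ε x univ = 1 := fun μ _ hμ =>
      localTrunc_apply_univ (hμ _ (closedBall_mem_nhds x hε)).ne'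
    refine (this (h.symm (measure_ne_top _ _) (by simp)) hβ hα hβx hαx (le_of_not_ge hle)).symm
      ?_ ?_
    · simp [huniv α hαx]
    · rw [huniv α hαx, huniv β hβx]
  have hD0 : 0 < D := diam_nonneg.trans_lt hD
  have hK := hβ.measure_closedBall_le hβx hε (le_add_of_nonneg_right hδ)
  rw [add_div, div_self hε.ne'] at hK
  have hK1 : 1 ≤ (1 + δ / ε) ^ Λ :=
    Real.one_le_rpow (le_add_of_nonneg_right (div_nonneg hδ hε.le)) hΛ
  intro A
  calc _root_.localTrunc α ε x A
      ≤ _root_.localTrunc β ε x (thickening δ A) + ENNReal.ofReal (PhiLDE Λ D ε δ) := by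
        rw [localTrunc_apply, localTrunc_apply]
        exact ENNReal.inv_mul_le_inv_mul_add_ofReal
          (measure_inter_closedBall_le_of_prokhorovCond h hδ hK A) hle
          (hα.ofReal_psiLD_le hαx hD hε) (psiLD_pos hD0 hε) hδ (sub_nonneg.mpr hK1)
    _ ≤ _ := by
      gcongr
      exact le_PhiLDE hΛ hD0 hε hδ

/-- **Claim 1 of the paper**: Prokhorov stability of local truncations.
For a compact metric space with diam < D and fully supported Λ-doubling Borel
probability measures α, β:
`d_P(m_α^{(ε)}(x), m_β^{(ε)}(x)) ≤ Φ_{Λ,D,ε}(d_P(α,β))` for every x. -/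
theorem prokhorov_stability_of_local_truncations
    {X : Type*} [MetricSpace X] [CompactSpace X] [MeasurableSpace X] [BorelSpace X]
    (D Λ ε : ℝ) (hD : Metric.diam (Set.univ : Set X) < D) (hΛ : 0 < Λ) (hε : 0 < ε)
    (α β : Measure X) [IsProbabilityMeasure α] [IsProbabilityMeasure β]
    (hαfull : msupport α = Set.univ) (hβfull : msupport β = Set.univ)
    (hα : DoublingCond α Λ) (hβ : DoublingCond β Λ) :
    ∀ x : X, prokhorovDist (localTrunc α ε x) (localTrunc β ε x) ≤
      PhiLDE Λ D ε (prokhorovDist α β) := by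
  intro x
  have hbound : ∀ δ ∈ {δ | 0 < δ ∧ ProkhorovCond α β δ},
      prokhorovDist (localTrunc α ε x) (localTrunc β ε x) ≤ PhiLDE Λ D ε δ := by
    rintro δ ⟨hδ, h⟩
    exact prokhorovDist_le (hδ.trans_le (le_PhiLDE hΛ.le (diam_nonneg.trans_lt hD) hε hδ.le))
      (h.localTrunc hδ.le hΛ.le hD hε hα hβ (hαfull ▸ mem_univ x) (hβfull ▸ mem_univ x))
  exact le_apply_csInf_of_forall_le (S := {δ | 0 < δ ∧ ProkhorovCond α β δ})
    ⟨1, one_pos, prokhorovCond_one⟩ ⟨0, fun _ hδ => hδ.1.le⟩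
    (continuous_PhiLDE hΛ.le D ε).continuousWithinAt hbound
end

section
/- Let α be a probability measure on ℝ with continuous density f, let ε > 0, and let x < x' with x + ε ≤ x' − ε, f(x) ≠ 0, f(x') ≠ 0. Then d_α^{(ε)}(x, x') = (x' − x) + H(x) − H(x'), where H(y) = (∫_{y−ε}^{y+ε} ∫_{y−ε}^{t} f(s) ds dt) / (∫_{y−ε}^{y+ε} f(s) ds). -/
/-! The truncations at `x` and `x'` live on `[x - ε, x + ε]` and `[x' - ε, x' + ε]`, which
meet in at most one point. Hence under every coupling `|s - t| = t - s` almost surely, every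
coupling costs the difference of the two means, and so does the infimum. Integrating by parts,
the mean of the truncation at `y` is `y + ε - H(y)`. -/

open MeasureTheory Metric Set Filter

open intervalIntegral

section Coupling

variable {μ ν : Measure ℝ} {c : ℝ}

theorem integral_dist_eq_integral_sub_of_ae_le {π : Measure (ℝ × ℝ)}
    (hπ₁ : π.map Prod.fst = μ) (hπ₂ : π.map Prod.snd = ν)
    (hμ : Integrable id μ) (hν : Integrable id ν)
    (hμc : ∀ᵐ s ∂μ, s ≤ c) (hνc : ∀ᵐ t ∂ν, c ≤ t) :
    ∫ p, dist p.1 p.2 ∂π = ∫ t, t ∂ν - ∫ s, s ∂μ := by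
  subst hπ₁ hπ₂
  have hdist : ∀ᵐ p ∂π, dist p.1 p.2 = p.2 - p.1 := by
    filter_upwards [ae_of_ae_map measurable_fst.aemeasurable hμc,
      ae_of_ae_map measurable_snd.aemeasurable hνc] with p hp₁ hp₂
    rw [dist_comm, Real.dist_eq, abs_of_nonneg (by linarith)]
  have h₁ : Integrable (fun p : ℝ × ℝ => p.1) π :=
    (integrable_map_measure aestronglyMeasurable_id measurable_fst.aemeasurable).1 hμ
  have h₂ : Integrable (fun p : ℝ × ℝ => p.2) π :=
    (integrable_map_measure aestronglyMeasurable_id measurable_snd.aemeasurable).1 hν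
  rw [integral_congr_ae hdist, integral_sub h₂ h₁,
    integral_map (f := fun t : ℝ => t) measurable_fst.aemeasurable aestronglyMeasurable_id,
    integral_map (f := fun t : ℝ => t) measurable_snd.aemeasurable aestronglyMeasurable_id]

theorem wassersteinDist_eq_integral_sub_of_ae_le [IsProbabilityMeasure μ] [IsProbabilityMeasure ν]
    (hμ : Integrable id μ) (hν : Integrable id ν)
    (hμc : ∀ᵐ s ∂μ, s ≤ c) (hνc : ∀ᵐ t ∂ν, c ≤ t) :
    wassersteinDist μ ν = ∫ t, t ∂ν - ∫ s, s ∂μ := by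
  have hcost : (fun π : Measure (ℝ × ℝ) => ∫ p, dist p.1 p.2 ∂π) ''
      {π | π.map Prod.fst = μ ∧ π.map Prod.snd = ν} = {∫ t, t ∂ν - ∫ s, s ∂μ} := by
    refine eq_singleton_iff_unique_mem.2 ⟨⟨μ.prod ν, by simp, ?_⟩, ?_⟩
    · exact integral_dist_eq_integral_sub_of_ae_le (by simp) (by simp) hμ hν hμc hνc
    · rintro _ ⟨π, ⟨hπ₁, hπ₂⟩, rfl⟩
      exact integral_dist_eq_integral_sub_of_ae_le hπ₁ hπ₂ hμ hν hμc hνc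
  rw [wassersteinDist, hcost, csInf_singleton]

end Coupling

section LocalTrunc

variable {X : Type*} [MeasurableSpace X] [PseudoMetricSpace X]

theorem ae_mem_closedBall_localTrunc [OpensMeasurableSpace X] (α : Measure X) (ε : ℝ) (x : X) :
    ∀ᵐ y ∂localTrunc α ε x, y ∈ closedBall x ε :=
  Measure.ae_smul_measure (ae_restrict_mem measurableSet_closedBall) _

theorem isProbabilityMeasure_localTrunc {α : Measure X} {ε : ℝ} {x : X}
    (h₀ : α (closedBall x ε) ≠ 0) (hfin : α (closedBall x ε) ≠ ⊤) : IsProbabilityMeasure (localTrunc α ε x) := by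
  constructor
  rw [localTrunc, Measure.smul_apply, Measure.restrict_apply_univ, smul_eq_mul,
    ENNReal.inv_mul_cancel h₀ hfin]

end LocalTrunc

theorem wassersteinDist_localTrunc_eq_integral_sub {α : Measure ℝ} [IsFiniteMeasure α]
    {ε x x' : ℝ} (hx : α (closedBall x ε) ≠ 0) (hx' : α (closedBall x' ε) ≠ 0)
    (hsep : x + ε ≤ x' - ε) :
    wassersteinDist (localTrunc α ε x) (localTrunc α ε x') =
      ∫ t, t ∂localTrunc α ε x' - ∫ s, s ∂localTrunc α ε x := by
  have := isProbabilityMeasure_localTrunc hx (measure_ne_top α _)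
  have := isProbabilityMeasure_localTrunc hx' (measure_ne_top α _)
  have hmem : ∀ y, ∀ᵐ t ∂localTrunc α ε y, t ∈ Icc (y - ε) (y + ε) := fun y => by
    simpa only [Real.closedBall_eq_Icc] using ae_mem_closedBall_localTrunc α ε y
  refine wassersteinDist_eq_integral_sub_of_ae_le (c := x + ε)
    (.of_mem_Icc _ _ aemeasurable_id (hmem x)) (.of_mem_Icc _ _ aemeasurable_id (hmem x'))
    ?_ ?_
  · filter_upwards [hmem x] with t ht using ht.2
  · filter_upwards [hmem x'] with t ht using hsep.trans ht.1

section Density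

variable {f : ℝ → ℝ} {a b : ℝ}

theorem withDensity_ofReal_apply_Icc (hf : IntegrableOn f (Icc a b)) (hf₀ : ∀ s, 0 ≤ f s)
    (hab : a ≤ b) :
    volume.withDensity (fun s => ENNReal.ofReal (f s)) (Icc a b) =
      ENNReal.ofReal (∫ s in a..b, f s) := by
  rw [withDensity_apply _ measurableSet_Icc, integral_of_le hab, ← integral_Icc_eq_integral_Ioc,
    ofReal_integral_eq_lintegral_ofReal hf (ae_of_all _ hf₀)]

theorem setIntegral_Icc_withDensity_ofReal (hf : Measurable f) (hf₀ : ∀ s, 0 ≤ f s)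
    (g : ℝ → ℝ) (hab : a ≤ b) :
    ∫ t in Icc a b, g t ∂volume.withDensity (fun s => ENNReal.ofReal (f s)) =
      ∫ t in a..b, g t * f t := by
  rw [setIntegral_withDensity_eq_setIntegral_toReal_smul (f := fun s => ENNReal.ofReal (f s))
    (ENNReal.measurable_ofReal.comp hf) (ae_of_all _ fun _ => ENNReal.ofReal_lt_top) g
    measurableSet_Icc, integral_of_le hab, ← integral_Icc_eq_integral_Ioc]
  simp only [ENNReal.toReal_ofReal (hf₀ _), smul_eq_mul, mul_comm]

theorem integral_primitive_eq_mul_sub (hf : Continuous f) (a b : ℝ) :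
    ∫ t in a..b, ∫ s in a..t, f s = b * (∫ s in a..b, f s) - ∫ t in a..b, t * f t := by
  have hprim : ∀ t ∈ uIcc a b, HasDerivAt (fun t => ∫ s in a..t, f s) (f t) t := fun _ _ =>
    integral_hasDerivAt_right (hf.intervalIntegrable _ _) (hf.stronglyMeasurableAtFilter _ _)
      hf.continuousAt
  have := integral_mul_deriv_eq_deriv_mul hprim (fun t _ => hasDerivAt_id t)
    (hf.intervalIntegrable _ _) intervalIntegrable_const
  simpa [mul_comm] using this

theorem integral_localTrunc_withDensity_ofReal (hf : Continuous f) (hf₀ : ∀ s, 0 ≤ f s)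
    {ε y : ℝ} (hε : 0 ≤ ε) (hmass : ∫ s in (y - ε)..(y + ε), f s ≠ 0) :
    ∫ t, t ∂localTrunc (volume.withDensity fun s => ENNReal.ofReal (f s)) ε y =
      (y + ε) - (∫ t in (y - ε)..(y + ε), ∫ s in (y - ε)..t, f s) /
        (∫ s in (y - ε)..(y + ε), f s) := by
  have hab : y - ε ≤ y + ε := by linarith
  rw [localTrunc, MeasureTheory.integral_smul_measure, Real.closedBall_eq_Icc,
    withDensity_ofReal_apply_Icc hf.integrableOn_Icc hf₀ hab,
    setIntegral_Icc_withDensity_ofReal hf.measurable hf₀ _ hab, integral_primitive_eq_mul_sub hf,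
    ENNReal.toReal_inv, ENNReal.toReal_ofReal (integral_nonneg hab fun s _ => hf₀ s), smul_eq_mul]
  field_simp
  ring

end Density

theorem wasserstein_transform_exact_formula_on_R_general
    (f : ℝ → ℝ) (hcont : Continuous f) (hf0 : ∀ s, 0 ≤ f s)
    (α : Measure ℝ) (hα : α = MeasureTheory.volume.withDensity fun s => ENNReal.ofReal (f s))
    [IsProbabilityMeasure α]
    (ε : ℝ) (hε : 0 < ε) (x x' : ℝ) (hsep : x + ε ≤ x' - ε)
    (hfx : f x ≠ 0) (hfx' : f x' ≠ 0) :
    wassersteinDist (localTrunc α ε x) (localTrunc α ε x') =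
      (x' - x) +
        (∫ t in (x - ε)..(x + ε), ∫ s in (x - ε)..t, f s) /
          (∫ s in (x - ε)..(x + ε), f s) -
        (∫ t in (x' - ε)..(x' + ε), ∫ s in (x' - ε)..t, f s) /
          (∫ s in (x' - ε)..(x' + ε), f s) := by
  subst hα
  have hmass : ∀ y, f y ≠ 0 → 0 < ∫ s in (y - ε)..(y + ε), f s := fun y hy =>
    integral_pos (by linarith) hcont.continuousOn (fun s _ => hf0 s)
      ⟨y, ⟨by linarith, by linarith⟩, (hf0 y).lt_of_ne' hy⟩
  have hball : ∀ y, f y ≠ 0 →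
      volume.withDensity (fun s => ENNReal.ofReal (f s)) (closedBall y ε) ≠ 0 := fun y hy => by
    rw [Real.closedBall_eq_Icc,
      withDensity_ofReal_apply_Icc hcont.integrableOn_Icc hf0 (by linarith)]
    exact (ENNReal.ofReal_pos.2 (hmass y hy)).ne'
  rw [wassersteinDist_localTrunc_eq_integral_sub (hball x hfx) (hball x' hfx') hsep,
    integral_localTrunc_withDensity_ofReal hcont hf0 hε.le (hmass x hfx).ne',
    integral_localTrunc_withDensity_ofReal hcont hf0 hε.le (hmass x' hfx').ne']
  ring

/-- The exact formula in the proof of Remark 4 of the paper: for a probability measure α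
on ℝ with continuous density f, ε > 0 and `x + ε ≤ x' − ε` with `f x ≠ 0 ≠ f x'`,
`d_α^{(ε)}(x,x') = (x'−x) + H(x) − H(x')`, where
`H(y) = (∫_{y−ε}^{y+ε} ∫_{y−ε}^{t} f(s) ds dt) / (∫_{y−ε}^{y+ε} f(s) ds)`. -/
theorem wasserstein_transform_exact_formula_on_R
    (f : ℝ → ℝ) (hcont : Continuous f) (hf0 : ∀ s, 0 ≤ f s)
    (α : Measure ℝ) (hα : α = MeasureTheory.volume.withDensity fun s => ENNReal.ofReal (f s))
    [IsProbabilityMeasure α]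
    (ε : ℝ) (hε : 0 < ε) (x x' : ℝ) (hxx : x < x') (hsep : x + ε ≤ x' - ε)
    (hfx : f x ≠ 0) (hfx' : f x' ≠ 0) :
    wassersteinDist (localTrunc α ε x) (localTrunc α ε x') =
      (x' - x) +
        (∫ t in (x - ε)..(x + ε), ∫ s in (x - ε)..t, f s) /
          (∫ s in (x - ε)..(x + ε), f s) -
        (∫ t in (x' - ε)..(x' + ε), ∫ s in (x' - ε)..t, f s) /
          (∫ s in (x' - ε)..(x' + ε), f s) :=
  wasserstein_transform_exact_formula_on_R_general f hcont hf0 α hα ε hε x x' hsep hfx hfx'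
end
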